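/- arXiv:1902.00329 — 4 statements merged into one kernel-verified Lean document; each statement's English description precedes it below -/
import Mathlib

section
/- GL(X → U) = 0 if and only if there exists a single permutation r of {1,...,n} that is a valid rank vector for all posterior distributions p_{X|U=u} simultaneously (i.e., for every u with p_U(u) > 0 and all i, j, p_{X|U=u}(i) > p_{X|U=u}(j) implies r(i) < r(j)). -/
/-!
Fix any rank vector `r`. Its expected guessing cost is linear in the distribution, and `H_G` is
the minimum of these costs, so `H_G` is concave: `H_G(X|U) ≤ H_G(X)`, with equality exactly when
one `r` is optimal for `p_X` and for every posterior of positive weight at once. By the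
rearrangement inequality and an exchange argument, `r` is optimal for `p` iff it ranks the
symbols in nonincreasing order of probability.
-/

noncomputable def HG {n : ℕ} (p : Fin n → ℝ) : ℝ :=
  Finset.univ.inf' Finset.univ_nonempty
    (fun r : Equiv.Perm (Fin n) => ∑ i, (((r i : ℕ) : ℝ) + 1) * p i)

open Finset

section

variable {n : ℕ}

noncomputable def guessingCost (r : Equiv.Perm (Fin n)) (p : Fin n → ℝ) : ℝ :=
  ∑ i, (((r i : ℕ) : ℝ) + 1) * p i

def IsRankVector (r : Equiv.Perm (Fin n)) (p : Fin n → ℝ) : Prop :=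
  ∀ i j, p j < p i → r i < r j

lemma HG_le_guessingCost (p : Fin n → ℝ) (r : Equiv.Perm (Fin n)) :
    HG p ≤ guessingCost r p :=
  inf'_le _ (mem_univ r)

lemma le_HG_iff {a : ℝ} {p : Fin n → ℝ} : a ≤ HG p ↔ ∀ r, a ≤ guessingCost r p := by
  simp [HG, le_inf'_iff, guessingCost]

lemma exists_guessingCost_eq_HG (p : Fin n → ℝ) : ∃ r, guessingCost r p = HG p := by
  obtain ⟨r, -, hr⟩ := exists_mem_eq_inf' univ_nonempty (guessingCost · p)
  exact ⟨r, hr.symm⟩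

lemma guessingCost_mixture {U : Type*} [Fintype U] (r : Equiv.Perm (Fin n)) (w : U → ℝ)
    (q : U → Fin n → ℝ) :
    guessingCost r (fun i => ∑ u, w u * q u i) = ∑ u, w u * guessingCost r (q u) := by
  simp only [guessingCost, mul_sum]
  rw [sum_comm]
  exact sum_congr rfl fun u _ => sum_congr rfl fun i _ => by ring

lemma sum_mul_HG_le_HG_mixture {U : Type*} [Fintype U] {w : U → ℝ} (hw : ∀ u, 0 ≤ w u)
    (q : U → Fin n → ℝ) : ∑ u, w u * HG (q u) ≤ HG (fun i => ∑ u, w u * q u i) :=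
  le_HG_iff.2 fun r => by
    rw [guessingCost_mixture]
    exact sum_le_sum fun u _ => mul_le_mul_of_nonneg_left (HG_le_guessingCost _ r) (hw u)

lemma guessingCost_le_of_isRankVector {r : Equiv.Perm (Fin n)} {p : Fin n → ℝ}
    (hr : IsRankVector r p) (s : Equiv.Perm (Fin n)) : guessingCost r p ≤ guessingCost s p := by
  have hanti : Antivary p (fun i => ((r i : ℕ) : ℝ) + 1) := fun i j hij => by
    simp only [add_lt_add_iff_right, Nat.cast_lt, Fin.val_fin_lt] at hij
    exact not_lt.1 fun h => (hr j i h).not_gt hij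
  -- rearrangement, with `s = r ∘ (r⁻¹ * s)`
  simpa [guessingCost, mul_comm] using hanti.sum_mul_le_sum_mul_comp_perm (σ := r⁻¹ * s)

lemma guessingCost_mul_swap_sub (r : Equiv.Perm (Fin n)) (p : Fin n → ℝ) {i j : Fin n}
    (hij : i ≠ j) :
    guessingCost (r * Equiv.swap i j) p - guessingCost r p
      = (((r i : ℕ) : ℝ) - ((r j : ℕ) : ℝ)) * (p j - p i) := by
  unfold guessingCost
  rw [← sum_sub_distrib, sum_eq_add_of_mem i j (mem_univ i) (mem_univ j) hij]
  · simp only [Equiv.Perm.mul_apply, Equiv.swap_apply_left, Equiv.swap_apply_right]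
    ring
  · intro k _ hk
    simp [Equiv.swap_apply_of_ne_of_ne hk.1 hk.2]

lemma isRankVector_of_forall_guessingCost_le {r : Equiv.Perm (Fin n)} {p : Fin n → ℝ}
    (hr : ∀ s, guessingCost r p ≤ guessingCost s p) : IsRankVector r p := by
  intro i j hp
  by_contra! hrji
  have hij : i ≠ j := by rintro rfl; exact hp.false
  have hlt : r j < r i := hrji.lt_of_ne fun h => hij (r.injective h).symm
  have hswap := guessingCost_mul_swap_sub r p hij
  have hneg : (((r i : ℕ) : ℝ) - ((r j : ℕ) : ℝ)) * (p j - p i) < 0 :=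
    mul_neg_of_pos_of_neg (sub_pos.2 (by exact_mod_cast hlt)) (sub_neg.2 hp)
  linarith [hr (r * Equiv.swap i j)]

lemma guessingCost_eq_HG_iff {r : Equiv.Perm (Fin n)} {p : Fin n → ℝ} :
    guessingCost r p = HG p ↔ IsRankVector r p :=
  ⟨fun h => isRankVector_of_forall_guessingCost_le fun s => h ▸ HG_le_guessingCost p s,
    fun h => le_antisymm (le_HG_iff.2 (guessingCost_le_of_isRankVector h))
      (HG_le_guessingCost p r)⟩
end

theorem guessing_leakage_eq_zero_iff_general {n : ℕ} {U : Type*} [Fintype U]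
    (pU : U → ℝ) (hU0 : ∀ u, 0 ≤ pU u)
    (pXgU : U → Fin n → ℝ)
    (pX : Fin n → ℝ) (hpX : ∀ i, pX i = ∑ u, pU u * pXgU u i) :
    HG pX - ∑ u, pU u * HG (pXgU u) = 0 ↔
      ∃ r : Equiv.Perm (Fin n), ∀ u, 0 < pU u →
        ∀ i j : Fin n, pXgU u j < pXgU u i → r i < r j := by
  obtain rfl : pX = fun i => ∑ u, pU u * pXgU u i := funext hpX
  have hgap : ∀ r u, pU u * HG (pXgU u) ≤ pU u * guessingCost r (pXgU u) := fun r u =>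
    mul_le_mul_of_nonneg_left (HG_le_guessingCost _ r) (hU0 u)
  rw [sub_eq_zero]
  constructor
  · intro h
    obtain ⟨r, hr⟩ := exists_guessingCost_eq_HG (fun i => ∑ u, pU u * pXgU u i)
    refine ⟨r, fun u hu => guessingCost_eq_HG_iff.1 ?_⟩
    have hsum : ∑ u, pU u * HG (pXgU u) = ∑ u, pU u * guessingCost r (pXgU u) := by
      rw [← guessingCost_mixture, hr, h]
    exact (mul_left_cancel₀ hu.ne' ((sum_eq_sum_iff_of_le fun u _ => hgap r u).1 hsum u
      (mem_univ u))).symm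
  · rintro ⟨r, hr⟩
    refine le_antisymm ?_ (sum_mul_HG_le_HG_mixture hU0 pXgU)
    calc HG _ ≤ guessingCost r _ := HG_le_guessingCost _ r
      _ = ∑ u, pU u * guessingCost r (pXgU u) := guessingCost_mixture r pU pXgU
      _ = ∑ u, pU u * HG (pXgU u) := sum_congr rfl fun u _ => by
          rcases (hU0 u).eq_or_lt with h | h
          · simp [← h]
          · rw [guessingCost_eq_HG_iff.2 (hr u h)]

/-- `GL(X → U) = 0` iff a single permutation `r` is a valid rank
vector for all posteriors `p_{X|U=u}` simultaneously. -/
theorem guessing_leakage_eq_zero_iff {n : ℕ} {U : Type*} [Fintype U]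
    (pU : U → ℝ) (hU0 : ∀ u, 0 ≤ pU u) (hU1 : ∑ u, pU u = 1)
    (pXgU : U → Fin n → ℝ)
    (hX0 : ∀ u i, 0 ≤ pXgU u i) (hX1 : ∀ u, ∑ i, pXgU u i = 1)
    (pX : Fin n → ℝ) (hpX : ∀ i, pX i = ∑ u, pU u * pXgU u i) :
    HG pX - ∑ u, pU u * HG (pXgU u) = 0 ↔
      ∃ r : Equiv.Perm (Fin n), ∀ u, 0 < pU u →
        ∀ i j : Fin n, pXgU u j < pXgU u i → r i < r j :=
  guessing_leakage_eq_zero_iff_general pU hU0 pXgU pX hpX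
end

section
/- Guessing leakage does not satisfy the linkage inequality: there exist finite random variables X, U, U' forming a Markov chain X − U − U' such that GL(X → U') > GL(U → U'). Concretely, take U' ~ Bern(1/2), U ∈ {1,2,3} with p_{U|U'=0} = (0.35, 0.4, 0.25) and p_{U|U'=1} = (0.3, 0.6, 0.1), and X = U mod 2; then GL(U → U') = 0 while GL(X → U') > 0. -/
/-- `p_{U|U'}` for the counterexample: `U' ~ Bern(1/2)`,
`p_{U|U'=0} = (0.35, 0.4, 0.25)`, `p_{U|U'=1} = (0.3, 0.6, 0.1)`. -/
noncomputable def pUgU' : Fin 2 → Fin 3 → ℝ :=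
  ![![0.35, 0.4, 0.25], ![0.3, 0.6, 0.1]]

/-- Posterior of `X = U mod 2` given `U'`. -/
noncomputable def pXgU' : Fin 2 → Fin 2 → ℝ :=
  fun u' x => ∑ u : Fin 3, if (u : ℕ) % 2 = (x : ℕ) then pUgU' u' u else 0

/-- Marginal of `U`. -/
noncomputable def pU : Fin 3 → ℝ := fun u => ∑ u' : Fin 2, (1 / 2) * pUgU' u' u

/-- Marginal of `X`. -/
noncomputable def pX : Fin 2 → ℝ := fun x => ∑ u' : Fin 2, (1 / 2) * pXgU' u' x

theorem HG_eq_of_antivary {n : ℕ} (p : Fin n → ℝ) (r : Equiv.Perm (Fin n)) (hr : Antivary r p) :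
    HG p = ∑ i, (((r i : ℕ) : ℝ) + 1) * p i := by
  refine le_antisymm (Finset.inf'_le _ (Finset.mem_univ r)) (Finset.le_inf' _ _ fun s _ => ?_)
  have hw : Antivary (fun i => ((r i : ℕ) : ℝ) + 1) p :=
    hr.comp_monotone_left (f' := fun k : Fin n => ((k : ℕ) : ℝ) + 1) fun a b hab => by
      simpa using hab
  -- `r⁻¹ * s` moves the weights of the order `r` onto those of `s`
  simpa using hw.sum_mul_le_sum_comp_perm_mul (σ := r.symm * s)

lemma HG_vec_two_of_le {a b : ℝ} (h : b ≤ a) : HG ![a, b] = a + 2 * b := by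
  rw [HG_eq_of_antivary _ 1]
  · norm_num
  · simpa [Antivary, Fin.forall_fin_two] using h

lemma HG_vec_two_of_ge {a b : ℝ} (h : a ≤ b) : HG ![a, b] = 2 * a + b := by
  rw [HG_eq_of_antivary _ (Equiv.swap 0 1)]
  · norm_num
  · simpa [Antivary, Fin.forall_fin_two] using h

lemma HG_vec_three_of_le_of_le {a b c : ℝ} (hab : a ≤ b) (hca : c ≤ a) :
    HG ![a, b, c] = 2 * a + b + 3 * c := by
  have h2 : Equiv.swap (0 : Fin 3) 1 2 = 2 := by decide
  rw [HG_eq_of_antivary _ (Equiv.swap 0 1)]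
  · simp [Fin.sum_univ_three, h2]
    ring
  · simpa [Antivary, Fin.forall_fin_succ, h2] using ⟨hca, hab, hca.trans hab⟩

lemma pUgU'_zero : pUgU' 0 = ![0.35, 0.4, 0.25] := rfl

lemma pUgU'_one : pUgU' 1 = ![0.3, 0.6, 0.1] := rfl

lemma pU_eq : pU = ![0.325, 0.5, 0.175] := by
  funext u; fin_cases u <;> norm_num [pU, pUgU']

lemma pXgU'_zero : pXgU' 0 = ![0.6, 0.4] := by
  funext x; fin_cases x <;> norm_num [pXgU', pUgU', Fin.sum_univ_three, Matrix.cons_val_two]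

lemma pXgU'_one : pXgU' 1 = ![0.4, 0.6] := by
  funext x; fin_cases x <;> norm_num [pXgU', pUgU', Fin.sum_univ_three, Matrix.cons_val_two]

lemma pX_eq : pX = ![0.5, 0.5] := by
  funext x; fin_cases x <;> norm_num [pX, pXgU'_zero, pXgU'_one]

/-- Guessing leakage violates the linkage inequality: for the
Markov chain `X − U − U'` above, `GL(U → U') = 0` but `GL(X → U') > 0`. -/
theorem guessing_leakage_no_linkage :
    HG pU - ∑ u' : Fin 2, (1 / 2) * HG (pUgU' u') = 0 ∧
    0 < HG pX - ∑ u' : Fin 2, (1 / 2) * HG (pXgU' u') := by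
  norm_num [Fin.sum_univ_two, pU_eq, pUgU'_zero, pUgU'_one, pX_eq, pXgU'_zero, pXgU'_one,
    HG_vec_three_of_le_of_le, HG_vec_two_of_le, HG_vec_two_of_ge]
end

section
/- Conditioning reduces guessing entropy: for any jointly distributed finite random variables X, U, U' with X − U − U' a Markov chain, H_G(X|U') ≥ H_G(X|U). -/
open Finset

lemma HG_le_sum {n : ℕ} (p : Fin n → ℝ) (r : Equiv.Perm (Fin n)) :
    HG p ≤ ∑ i, (((r i : ℕ) : ℝ) + 1) * p i :=
  inf'_le _ (mem_univ r)

lemma sum_mul_HG_le_HG_sum {n : ℕ} {ι : Type*} [Fintype ι] (w : ι → ℝ) (hw : ∀ j, 0 ≤ w j)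
    (q : ι → Fin n → ℝ) :
    ∑ j, w j * HG (q j) ≤ HG (∑ j, w j • q j) := by
  obtain ⟨r, -, hr⟩ := exists_mem_eq_inf' univ_nonempty
    (fun r : Equiv.Perm (Fin n) => ∑ i, (((r i : ℕ) : ℝ) + 1) * (∑ j, w j • q j) i)
  have hmix : HG (∑ j, w j • q j) = ∑ j, w j * ∑ i, (((r i : ℕ) : ℝ) + 1) * q j i := by
    rw [HG, hr]
    simp only [Finset.sum_apply, Pi.smul_apply, smul_eq_mul, mul_sum]
    rw [sum_comm]
    exact sum_congr rfl fun _ _ => sum_congr rfl fun _ _ => by ring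
  rw [hmix]
  gcongr with j
  exacts [hw j, HG_le_sum (q j) r]

theorem conditional_HG_markov_general {n : ℕ} {U U' : Type*} [Fintype U] [Fintype U']
    (pU' : U' → ℝ) (hU'0 : ∀ u', 0 ≤ pU' u')
    (pUgU' : U' → U → ℝ) (hUg0 : ∀ u' u, 0 ≤ pUgU' u' u)
    (pXgU : U → Fin n → ℝ)
    (pU : U → ℝ) (hpU : ∀ u, pU u = ∑ u', pU' u' * pUgU' u' u)
    (pXgU' : U' → Fin n → ℝ)
    (hXgU' : ∀ u' i, pXgU' u' i = ∑ u, pUgU' u' u * pXgU u i) :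
    ∑ u, pU u * HG (pXgU u) ≤ ∑ u', pU' u' * HG (pXgU' u') := by
  have hmix : ∀ u', pXgU' u' = ∑ u, pUgU' u' u • pXgU u := fun u' => by
    ext i
    simp only [hXgU', Finset.sum_apply, Pi.smul_apply, smul_eq_mul]
  calc ∑ u, pU u * HG (pXgU u)
      = ∑ u', pU' u' * ∑ u, pUgU' u' u * HG (pXgU u) := by
        simp only [hpU, sum_mul, mul_sum]
        rw [sum_comm]
        exact sum_congr rfl fun _ _ => sum_congr rfl fun _ _ => by ring
    _ ≤ ∑ u', pU' u' * HG (pXgU' u') := by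
        gcongr with u'
        · exact hU'0 u'
        · rw [hmix]
          exact sum_mul_HG_le_HG_sum _ (hUg0 u') pXgU

/-- Conditioning reduces guessing entropy. For a Markov chain
`X − U − U'`, `H_G(X|U') ≥ H_G(X|U)`. -/
theorem conditional_HG_markov {n : ℕ} {U U' : Type*} [Fintype U] [Fintype U']
    (pU' : U' → ℝ) (hU'0 : ∀ u', 0 ≤ pU' u') (hU'1 : ∑ u', pU' u' = 1)
    (pUgU' : U' → U → ℝ) (hUg0 : ∀ u' u, 0 ≤ pUgU' u' u)
    (hUg1 : ∀ u', ∑ u, pUgU' u' u = 1)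
    (pXgU : U → Fin n → ℝ)
    (hX0 : ∀ u i, 0 ≤ pXgU u i) (hX1 : ∀ u, ∑ i, pXgU u i = 1)
    (pU : U → ℝ) (hpU : ∀ u, pU u = ∑ u', pU' u' * pUgU' u' u)
    (pXgU' : U' → Fin n → ℝ)
    (hXgU' : ∀ u' i, pXgU' u' i = ∑ u, pUgU' u' u * pXgU u i) :
    ∑ u, pU u * HG (pXgU u) ≤ ∑ u', pU' u' * HG (pXgU' u') :=
  conditional_HG_markov_general pU' hU'0 pUgU' hUg0 pXgU pU hpU pXgU' hXgU'
end

section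
/- If the n entries of p_X are pairwise distinct and all conditional distributions p_{X|U=u} lie in the interior of the same rank partition region as p_X (i.e., they induce the same strict ordering of probabilities as p_X), then GL(X → U) = 0. -/
/-!
With the outcomes listed in decreasing order of `p_X`, guessing in that order is optimal both
for `p_X` and (rearrangement inequality) for every posterior that ranks the outcomes the same way.
So one guessing order realises every minimum in the definition of `H_G`, and the cost of a fixed
order is linear in the distribution; averaging the posteriors recovers `H_G(X)` exactly.
-/

open Finset

/-- `r i` is the 0-indexed position at which the outcome `i` is guessed. -/
def guessCost {n : ℕ} (r : Equiv.Perm (Fin n)) (q : Fin n → ℝ) : ℝ :=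
  ∑ i, (((r i : ℕ) : ℝ) + 1) * q i

lemma guessCost_weighted_sum {n : ℕ} {U : Type*} [Fintype U] (r : Equiv.Perm (Fin n))
    (w : U → ℝ) (q : U → Fin n → ℝ) :
    guessCost r (fun i => ∑ u, w u * q u i) = ∑ u, w u * guessCost r (q u) := by
  simp only [guessCost, mul_sum]
  rw [sum_comm]
  exact sum_congr rfl fun _ _ => sum_congr rfl fun _ _ => by ring

lemma HG_le_guessCost {n : ℕ} (r : Equiv.Perm (Fin n)) (q : Fin n → ℝ) :
    HG q ≤ guessCost r q :=
  inf'_le _ (mem_univ r)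

lemma HG_eq_guessCost_of_antitone {n : ℕ} {q : Fin n → ℝ} {σ : Equiv.Perm (Fin n)}
    (hq : Antitone (q ∘ σ)) : HG q = guessCost σ.symm q := by
  have hanti : Antivary (fun i => ((σ.symm i : ℕ) : ℝ) + 1) q := by
    refine Antivary.symm fun i j hij => ?_
    have hlt : σ.symm i < σ.symm j := by exact_mod_cast (add_lt_add_iff_right _).1 hij
    simpa using hq hlt.le
  refine le_antisymm (HG_le_guessCost _ _) (le_inf' _ _ fun r _ => ?_)
  calc guessCost σ.symm q
      ≤ ∑ i, (((σ.symm (σ (r i)) : ℕ) : ℝ) + 1) * q i :=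
        hanti.sum_mul_le_sum_comp_perm_mul (σ := r.trans σ)
    _ = guessCost r q := by simp [guessCost]

lemma exists_perm_strictAnti_comp {n : ℕ} {p : Fin n → ℝ} (hp : Function.Injective p) :
    ∃ σ : Equiv.Perm (Fin n), StrictAnti (p ∘ σ) := by
  refine ⟨Tuple.sort (-p), fun a b hab => neg_lt_neg_iff.1 ?_⟩
  exact (Tuple.monotone_sort (-p)).strictMono_of_injective
    ((neg_injective.comp hp).comp (Tuple.sort (-p)).injective) hab

theorem same_rank_partition_zero_leakage_general {n : ℕ} {U : Type*} [Fintype U]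
    (pU : U → ℝ) (hU0 : ∀ u, 0 ≤ pU u)
    (pXgU : U → Fin n → ℝ)
    (pX : Fin n → ℝ) (hpX : ∀ i, pX i = ∑ u, pU u * pXgU u i)
    (hdistinct : ∀ i j : Fin n, i ≠ j → pX i ≠ pX j)
    (horder : ∀ u, 0 < pU u → ∀ i j : Fin n, pX j < pX i →
      pXgU u j < pXgU u i) :
    HG pX - ∑ u, pU u * HG (pXgU u) = 0 := by
  obtain ⟨σ, hσ⟩ := exists_perm_strictAnti_comp (p := pX)
    fun i j hij => by_contra fun hne => hdistinct i j hne hij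
  have hposterior : ∀ u, pU u * HG (pXgU u) = pU u * guessCost σ.symm (pXgU u) := by
    intro u
    rcases (hU0 u).eq_or_lt with hzero | hpos
    · simp [← hzero]
    · rw [HG_eq_guessCost_of_antitone
        (StrictAnti.antitone fun a b hab => horder u hpos _ _ (hσ hab))]
  rw [sum_congr rfl fun u _ => hposterior u, HG_eq_guessCost_of_antitone hσ.antitone,
    funext hpX, guessCost_weighted_sum, sub_self]

/-- If the entries of `p_X` are pairwise distinct and every
posterior `p_{X|U=u}` induces the same strict ordering of probabilities as
`p_X`, then `GL(X → U) = 0`. -/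
theorem same_rank_partition_zero_leakage {n : ℕ} {U : Type*} [Fintype U]
    (pU : U → ℝ) (hU0 : ∀ u, 0 ≤ pU u) (hU1 : ∑ u, pU u = 1)
    (pXgU : U → Fin n → ℝ)
    (hX0 : ∀ u i, 0 ≤ pXgU u i) (hX1 : ∀ u, ∑ i, pXgU u i = 1)
    (pX : Fin n → ℝ) (hpX : ∀ i, pX i = ∑ u, pU u * pXgU u i)
    (hdistinct : ∀ i j : Fin n, i ≠ j → pX i ≠ pX j)
    (horder : ∀ u, 0 < pU u → ∀ i j : Fin n, pX j < pX i →
      pXgU u j < pXgU u i) :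
    HG pX - ∑ u, pU u * HG (pXgU u) = 0 :=
  same_rank_partition_zero_leakage_general pU hU0 pXgU pX hpX hdistinct horder
end
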